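/- (Lower bound on the growth rate at δ → 0⁺, from Appendix B) Let Ω be an LT output degree distribution with average degree Ω̄, r_i ∈ (0,1] and r_o ∈ (0,1). Then sup_{λ ∈ 𝒟_λ} [ r_i·H_b(λ) + log₂(1 − ρ_λ) ] ≥ r_i·H_b(1 − r_o) + Ω̄·log₂(r_o). -/

import Mathlib

open Finset Filter

/-- Binary entropy function (base-2 logarithms). -/
noncomputable def Hb (x : ℝ) : ℝ := -x * Real.logb 2 x - (1 - x) * Real.logb 2 (1 - x)

/-- `ρ_λ = (1/2)·Σ_{j=1}^{dmax} Ω_j·(1 − (1 − 2λ)^j)`. -/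
noncomputable def rho (dmax : ℕ) (Ω : ℕ → ℝ) (lam : ℝ) : ℝ :=
  (1 / 2) * ∑ j ∈ Finset.Icc 1 dmax, Ω j * (1 - (1 - 2 * lam) ^ j)

open scoped Classical in
/-- The domain `𝒟_λ`: `(0,1)` if `Ω_j = 0` for every even `j`, and `(0,1]` otherwise. -/
noncomputable def Dset (dmax : ℕ) (Ω : ℕ → ℝ) : Set ℝ :=
  if ∀ j ∈ Finset.Icc 1 dmax, Even j → Ω j = 0 then Set.Ioo 0 1 else Set.Ioc 0 1

/-- `f(δ,λ) = r_i·H_b(λ) + δ·log₂ ρ_λ + (1−δ)·log₂(1−ρ_λ)`. -/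
noncomputable def ff (dmax : ℕ) (Ω : ℕ → ℝ) (ri δ lam : ℝ) : ℝ :=
  ri * Hb lam + δ * Real.logb 2 (rho dmax Ω lam) + (1 - δ) * Real.logb 2 (1 - rho dmax Ω lam)

/-- `f_max(δ) = sup_{λ ∈ 𝒟_λ} f(δ,λ)`. -/
noncomputable def fmax (dmax : ℕ) (Ω : ℕ → ℝ) (ri δ : ℝ) : ℝ :=
  sSup (ff dmax Ω ri δ '' Dset dmax Ω)

/-- Growth rate `G(δ) = H_b(δ) − r_i·(1 − r_o) + f_max(δ)`. -/
noncomputable def Gr (dmax : ℕ) (Ω : ℕ → ℝ) (ri ro δ : ℝ) : ℝ :=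
  Hb δ - ri * (1 - ro) + fmax dmax Ω ri δ

/-- Normalized typical minimum distance `δ*`: `0` if `lim_{δ→0⁺} G(δ) ≥ 0`, and
`inf {δ > 0 : G(δ) > 0}` otherwise. -/
noncomputable def deltaStar (dmax : ℕ) (Ω : ℕ → ℝ) (ri ro : ℝ) : ℝ :=
  if 0 ≤ limUnder (nhdsWithin 0 (Set.Ioi 0)) (Gr dmax Ω ri ro) then 0
  else sInf {δ : ℝ | 0 < δ ∧ 0 < Gr dmax Ω ri ro δ}

/-! At `λ = 1 - r_o` one has `1 - ρ_λ = Σ Ω_j (1 + x^j)/2` with `x = 2 r_o - 1`, and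
`((1 + x)/2)^j ≤ (1 + x^j)/2` on `[-1, 1]` bounds this below by `Σ Ω_j r_o^j`, which weighted
AM–GM bounds below by `r_o^Ω̄`. The supremum is over a set bounded above by `r_i`, since
`H_b ≤ 1` and `ρ_λ ∈ [0, 1]`. -/

lemma half_one_add_pow_le {x : ℝ} (hx₀ : -1 ≤ x) (hx₁ : x ≤ 1) {j : ℕ} (hj : j ≠ 0) :
    ((1 + x) / 2) ^ j ≤ (1 + x ^ j) / 2 := by
  rcases le_or_gt 0 x with hx | hx
  · have h := (convexOn_pow j).2 (Set.mem_Ici.2 hx) (Set.mem_Ici.2 zero_le_one)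
      (by norm_num : (0 : ℝ) ≤ 1 / 2) (by norm_num : (0 : ℝ) ≤ 1 / 2) (by norm_num)
    simp only [smul_eq_mul, one_pow, mul_one] at h
    calc ((1 + x) / 2) ^ j = (1 / 2 * x + 1 / 2) ^ j := by ring_nf
      _ ≤ 1 / 2 * x ^ j + 1 / 2 := h
      _ = (1 + x ^ j) / 2 := by ring
  · -- `|x ^ j| ≤ |x|` and `(1 + x) / 2 ≤ 1`: compare both sides with `(1 + x) / 2`
    have hxj : -|x| ≤ x ^ j := by
      have := pow_le_of_le_one (abs_nonneg x) (abs_le.2 ⟨hx₀, hx₁⟩) hj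
      rw [← abs_pow] at this
      linarith [neg_abs_le (x ^ j)]
    calc ((1 + x) / 2) ^ j ≤ (1 + x) / 2 := pow_le_of_le_one (by linarith) (by linarith) hj
      _ ≤ (1 + x ^ j) / 2 := by rw [abs_of_neg hx] at hxj; linarith

lemma mean_mul_logb_le_logb_sum_mul_pow {ι : Type*} {s : Finset ι} {w : ι → ℝ} {b r : ℝ}
    (hb : 1 < b) (hr : 0 < r) (k : ι → ℕ) (hw₀ : ∀ i ∈ s, 0 ≤ w i) (hw : ∑ i ∈ s, w i = 1) :
    (∑ i ∈ s, (k i : ℝ) * w i) * Real.logb b r ≤ Real.logb b (∑ i ∈ s, w i * r ^ k i) := by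
  have amgm : r ^ (∑ i ∈ s, (k i : ℝ) * w i) ≤ ∑ i ∈ s, w i * r ^ k i := by
    refine le_of_eq_of_le ?_ (Real.geom_mean_le_arith_mean_weighted s w (fun i => r ^ k i)
      hw₀ hw fun i _ => by positivity)
    rw [Real.rpow_sum_of_pos hr]
    refine Finset.prod_congr rfl fun i _ => ?_
    rw [← Real.rpow_natCast, ← Real.rpow_mul hr.le]
  rw [← Real.logb_rpow_eq_mul_logb_of_pos hr]
  exact Real.logb_le_logb_of_le hb (by positivity) amgm

lemma Hb_le_one (x : ℝ) : Hb x ≤ 1 := by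
  have h : Hb x = Real.binEntropy x / Real.log 2 := by
    rw [Hb, Real.binEntropy, Real.logb, Real.logb, Real.log_inv, Real.log_inv]
    ring
  rw [h, div_le_one (Real.log_pos one_lt_two)]
  exact Real.binEntropy_le_log_two

section DegreeDistribution

variable {dmax : ℕ} {Ω : ℕ → ℝ}

lemma one_sub_rho_eq (hΩ : ∑ j ∈ Finset.Icc 1 dmax, Ω j = 1) (lam : ℝ) :
    1 - rho dmax Ω lam = ∑ j ∈ Finset.Icc 1 dmax, Ω j * ((1 + (1 - 2 * lam) ^ j) / 2) := by
  rw [rho, Finset.mul_sum]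
  nth_rewrite 1 [← hΩ]
  rw [← Finset.sum_sub_distrib]
  exact Finset.sum_congr rfl fun j _ => by ring

lemma rho_mem_Icc (hΩ₀ : ∀ j ∈ Finset.Icc 1 dmax, 0 ≤ Ω j)
    (hΩ : ∑ j ∈ Finset.Icc 1 dmax, Ω j = 1) {lam : ℝ} (hlam : lam ∈ Set.Icc 0 1) :
    rho dmax Ω lam ∈ Set.Icc 0 1 := by
  have hpow : ∀ j : ℕ, |(1 - 2 * lam) ^ j| ≤ 1 := fun j => by
    rw [abs_pow]
    exact pow_le_one₀ (abs_nonneg _) (abs_le.2 ⟨by linarith [hlam.2], by linarith [hlam.1]⟩)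
  have h₁ : 0 ≤ 1 - rho dmax Ω lam := by
    rw [one_sub_rho_eq hΩ]
    exact Finset.sum_nonneg fun j hj =>
      mul_nonneg (hΩ₀ j hj) (by linarith [neg_abs_le ((1 - 2 * lam) ^ j), hpow j])
  have h₀ : 0 ≤ rho dmax Ω lam :=
    mul_nonneg (by norm_num) (Finset.sum_nonneg fun j hj =>
      mul_nonneg (hΩ₀ j hj) (by linarith [le_abs_self ((1 - 2 * lam) ^ j), hpow j]))
  exact ⟨h₀, by linarith⟩

lemma sum_mul_pow_le_one_sub_rho (hΩ₀ : ∀ j ∈ Finset.Icc 1 dmax, 0 ≤ Ω j)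
    (hΩ : ∑ j ∈ Finset.Icc 1 dmax, Ω j = 1) {r : ℝ} (hr : r ∈ Set.Icc 0 1) :
    ∑ j ∈ Finset.Icc 1 dmax, Ω j * r ^ j ≤ 1 - rho dmax Ω (1 - r) := by
  rw [one_sub_rho_eq hΩ]
  refine Finset.sum_le_sum fun j hj => mul_le_mul_of_nonneg_left ?_ (hΩ₀ j hj)
  have key := half_one_add_pow_le (x := 1 - 2 * (1 - r)) (by linarith [hr.1]) (by linarith [hr.2])
    (Nat.one_le_iff_ne_zero.1 (Finset.mem_Icc.1 hj).1)
  rwa [show (1 + (1 - 2 * (1 - r))) / 2 = r by ring] at key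

lemma sum_mul_pow_pos (hΩ₀ : ∀ j ∈ Finset.Icc 1 dmax, 0 ≤ Ω j)
    (hΩ : ∑ j ∈ Finset.Icc 1 dmax, Ω j = 1) {r : ℝ} (hr : 0 < r) :
    0 < ∑ j ∈ Finset.Icc 1 dmax, Ω j * r ^ j := by
  obtain ⟨j, hj, hΩj⟩ := Finset.exists_ne_zero_of_sum_ne_zero (hΩ.trans_ne one_ne_zero)
  exact Finset.sum_pos' (fun i hi => mul_nonneg (hΩ₀ i hi) (by positivity))
    ⟨j, hj, mul_pos ((hΩ₀ j hj).lt_of_ne' hΩj) (by positivity)⟩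

lemma Dset_subset_Ioc : Dset dmax Ω ⊆ Set.Ioc 0 1 := by
  unfold Dset
  split_ifs
  exacts [Set.Ioo_subset_Ioc_self, subset_rfl]

lemma Ioo_subset_Dset : Set.Ioo 0 1 ⊆ Dset dmax Ω := by
  unfold Dset
  split_ifs
  exacts [subset_rfl, Set.Ioo_subset_Ioc_self]

lemma bddAbove_image_Dset (hΩ₀ : ∀ j ∈ Finset.Icc 1 dmax, 0 ≤ Ω j)
    (hΩ : ∑ j ∈ Finset.Icc 1 dmax, Ω j = 1) {ri : ℝ} (hri : 0 ≤ ri) :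
    BddAbove ((fun lam => ri * Hb lam + Real.logb 2 (1 - rho dmax Ω lam)) '' Dset dmax Ω) := by
  refine ⟨ri, Set.forall_mem_image.2 fun lam hlam => ?_⟩
  have hrho := rho_mem_Icc hΩ₀ hΩ (Set.Ioc_subset_Icc_self (Dset_subset_Ioc hlam))
  have hlog : Real.logb 2 (1 - rho dmax Ω lam) ≤ 0 :=
    Real.logb_nonpos one_lt_two (by linarith [hrho.2]) (by linarith [hrho.1])
  nlinarith [Hb_le_one lam]

end DegreeDistribution

/-- Lower bound on the growth rate at `δ → 0⁺` (Appendix B):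
`sup_{λ ∈ 𝒟_λ} [ r_i·H_b(λ) + log₂(1 − ρ_λ) ] ≥ r_i·H_b(1 − r_o) + Ω̄·log₂ r_o`. -/
theorem stmt_14 (dmax : ℕ) (Ω : ℕ → ℝ)
    (hΩpos : ∀ j ∈ Finset.Icc 1 dmax, 0 ≤ Ω j)
    (hΩsum : ∑ j ∈ Finset.Icc 1 dmax, Ω j = 1)
    (ri ro : ℝ) (hri : ri ∈ Set.Ioc (0 : ℝ) 1) (hro : ro ∈ Set.Ioo (0 : ℝ) 1) :
    sSup ((fun lam => ri * Hb lam + Real.logb 2 (1 - rho dmax Ω lam)) '' Dset dmax Ω) ≥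
      ri * Hb (1 - ro) + (∑ j ∈ Finset.Icc 1 dmax, (j : ℝ) * Ω j) * Real.logb 2 ro := by
  obtain ⟨hro₀, hro₁⟩ := hro
  refine le_csSup_of_le (bddAbove_image_Dset hΩpos hΩsum hri.1.le)
    ⟨1 - ro, Ioo_subset_Dset ⟨by linarith, by linarith⟩, rfl⟩ ?_
  dsimp only
  gcongr ri * Hb (1 - ro) + ?_
  calc (∑ j ∈ Finset.Icc 1 dmax, (j : ℝ) * Ω j) * Real.logb 2 ro
      ≤ Real.logb 2 (∑ j ∈ Finset.Icc 1 dmax, Ω j * ro ^ j) :=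
        mean_mul_logb_le_logb_sum_mul_pow one_lt_two hro₀ id hΩpos hΩsum
    _ ≤ Real.logb 2 (1 - rho dmax Ω (1 - ro)) :=
        Real.logb_le_logb_of_le one_lt_two (sum_mul_pow_pos hΩpos hΩsum hro₀)
          (sum_mul_pow_le_one_sub_rho hΩpos hΩsum ⟨hro₀.le, hro₁.le⟩)
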